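/- arXiv:2402.17007 — 3 statements merged into one kernel-verified Lean document; each statement's English description precedes it below -/
import Mathlib

section
/- Let x, x̂ ∈ T_n^δ(X) be two strongly δ-typical sequences over a finite alphabet 𝒳. Define f(x, x̂) := Σ_{a∈𝒳} | |a(x)| − |a(x̂)| |, where |a(x)| is the number of occurrences of a in x. Then there exists a permutation π of {1,…,n} and an increasing sequence of indices i_1 < ⋯ < i_{f(x,x̂)} such that π(x̂) agrees with x at every position outside {i_1,…,i_{f(x,x̂)}}, and f(x,x̂) ≤ ⌈2δn⌉. -/
open scoped BigOperators

/-- Number of occurrences of symbol `a` in the sequence `x`. -/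
def seqCount {𝒳 : Type*} [DecidableEq 𝒳] {n : ℕ} (x : Fin n → 𝒳) (a : 𝒳) : ℕ :=
  (Finset.univ.filter fun i => x i = a).card

/-- Membership in the strongly δ-typical set `T_n^δ(X)`. -/
def StronglyTypical {𝒳 : Type*} [Fintype 𝒳] [DecidableEq 𝒳] {n : ℕ}
    (p : 𝒳 → ℝ) (δ : ℝ) (x : Fin n → 𝒳) : Prop :=
  ∀ a : 𝒳, |(seqCount x a : ℝ) / n - p a| ≤ δ * p a

/-- `f(x, x̂) = Σ_a | |a(x)| − |a(x̂)| |`, the total count mismatch of two sequences. -/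
def countMismatch {𝒳 : Type*} [Fintype 𝒳] [DecidableEq 𝒳] {n : ℕ} (x y : Fin n → 𝒳) : ℕ :=
  ∑ a : 𝒳, ((seqCount x a : ℤ) - (seqCount y a : ℤ)).natAbs

section Aux

variable {𝒳 : Type*} [DecidableEq 𝒳] {n : ℕ}

private lemma coe_apply_congr (S T : 𝒳 → Finset (Fin n))
    (e : ∀ a, {i // i ∈ S a} ≃ {i // i ∈ T a}) {a b : 𝒳} (hab : a = b) (j : Fin n)
    (hja : j ∈ S a) (hjb : j ∈ S b) :
    ((e a ⟨j, hja⟩ : {i // i ∈ T a}) : Fin n) = ((e b ⟨j, hjb⟩ : {i // i ∈ T b}) : Fin n) := by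
  subst hab; rfl

/-- If two sequences have identical symbol counts, one is a permutation of the other. -/
private lemma exists_perm_of_counts_eq (x y : Fin n → 𝒳)
    (h : ∀ a, seqCount x a = seqCount y a) :
    ∃ π : Equiv.Perm (Fin n), ∀ i, y (π i) = x i := by
  classical
  set S : 𝒳 → Finset (Fin n) := fun a => Finset.univ.filter fun i => x i = a with hS
  set T : 𝒳 → Finset (Fin n) := fun a => Finset.univ.filter fun i => y i = a with hT
  have e : ∀ a : 𝒳, {i // i ∈ S a} ≃ {i // i ∈ T a} := fun a =>
    Fintype.equivOfCardEq (by
      simp only [Fintype.card_coe]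
      exact h a)
  have hmem : ∀ i : Fin n, i ∈ S (x i) := fun i => by simp [hS]
  set f : Fin n → Fin n := fun i => ((e (x i) ⟨i, hmem i⟩ : {j // j ∈ T (x i)}) : Fin n)
    with hf
  have hyf : ∀ i, y (f i) = x i := by
    intro i
    have h2 := (e (x i) ⟨i, hmem i⟩).2
    simp only [hT, Finset.mem_filter] at h2
    exact h2.2
  have hinj : Function.Injective f := by
    intro i j hij
    have hx : x j = x i := by rw [← hyf i, ← hyf j, hij]
    have hmj : j ∈ S (x i) := hx ▸ hmem j
    have : ((e (x i) ⟨i, hmem i⟩ : {k // k ∈ T (x i)}) : Fin n) =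
        ((e (x i) ⟨j, hmj⟩ : {k // k ∈ T (x i)}) : Fin n) := by
      rw [← coe_apply_congr S T e hx j (hmem j) hmj]
      exact hij
    have := (e (x i)).injective (Subtype.ext this)
    exact congrArg Subtype.val this
  refine ⟨Equiv.ofBijective f (Finite.injective_iff_bijective.mp hinj), fun i => hyf i⟩

private lemma seqCount_update (y : Fin n → 𝒳) (i : Fin n) (a c : 𝒳) (hne : a ≠ y i) :
    (seqCount (Function.update y i a) c : ℤ) =
      (seqCount y c : ℤ) + (if c = a then 1 else 0) - (if c = y i then 1 else 0) := by
  classical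
  by_cases hca : c = a
  · subst hca
    have hset : (Finset.univ.filter fun j => Function.update y i c j = c) =
        insert i (Finset.univ.filter fun j => y j = c) := by
      ext j
      simp only [Finset.mem_filter, Finset.mem_univ, true_and, Finset.mem_insert]
      by_cases hji : j = i
      · subst hji; simp [Function.update_self]
      · simp [Function.update_of_ne hji, hji]
    have hnotmem : i ∉ (Finset.univ.filter fun j => y j = c) := by
      simp [Ne.symm hne]
    have hcyi : ¬ (c = y i) := fun hcy => hne (hcy ▸ rfl)
    simp only [seqCount, hset, Finset.card_insert_of_notMem hnotmem, if_pos rfl, if_neg hcyi]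
    push_cast
    ring
  · by_cases hcy : c = y i
    · subst hcy
      have hset : (Finset.univ.filter fun j => Function.update y i a j = y i) =
          (Finset.univ.filter fun j => y j = y i).erase i := by
        ext j
        simp only [Finset.mem_filter, Finset.mem_univ, true_and, Finset.mem_erase]
        by_cases hji : j = i
        · subst hji; simp [Function.update_self, Ne.symm, hne]
        · simp [Function.update_of_ne hji, hji]
      have hmemi : i ∈ (Finset.univ.filter fun j => y j = y i) := by simp
      have hpos : 1 ≤ (Finset.univ.filter fun j => y j = y i).card :=
        Finset.card_pos.mpr ⟨i, hmemi⟩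
      simp only [seqCount, hset, Finset.card_erase_of_mem hmemi, if_neg hca, if_pos rfl]
      rw [Nat.cast_sub hpos]
      push_cast
      ring
    · have hset : (Finset.univ.filter fun j => Function.update y i a j = c) =
          (Finset.univ.filter fun j => y j = c) := by
        ext j
        simp only [Finset.mem_filter, Finset.mem_univ, true_and]
        by_cases hji : j = i
        · subst hji
          simp only [Function.update_self]
          exact iff_of_false (fun h => hca h.symm) (fun h => hcy h.symm)
        · simp [Function.update_of_ne hji]
      simp [seqCount, hset, hca, hcy]

end Aux

section Aux2

variable {𝒳 : Type*} [Fintype 𝒳] [DecidableEq 𝒳] {n : ℕ}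

private lemma sum_seqCount (x : Fin n → 𝒳) : ∑ a : 𝒳, seqCount x a = n := by
  classical
  have := Finset.card_eq_sum_card_fiberwise
    (f := x) (s := Finset.univ) (t := Finset.univ) (fun i _ => Finset.mem_univ (x i))
  simpa [seqCount] using this.symm

private lemma exists_excess (x y : Fin n → 𝒳) (h : countMismatch x y ≠ 0) :
    (∃ a, seqCount y a < seqCount x a) ∧ (∃ b, seqCount x b < seqCount y b) := by
  classical
  constructor
  · by_contra hcon
    push_neg at hcon
    have hle : ∀ a : 𝒳, seqCount x a ≤ seqCount y a := hcon
    have hsum : ∑ a : 𝒳, seqCount x a = ∑ a : 𝒳, seqCount y a := by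
      rw [sum_seqCount, sum_seqCount]
    have heq : ∀ a ∈ Finset.univ, seqCount x a = seqCount y a :=
      (Finset.sum_eq_sum_iff_of_le (fun a _ => hle a)).mp hsum
    apply h
    simp only [countMismatch]
    apply Finset.sum_eq_zero
    intro a _
    rw [heq a (Finset.mem_univ a)]
    omega
  · by_contra hcon
    push_neg at hcon
    have hle : ∀ a : 𝒳, seqCount y a ≤ seqCount x a := hcon
    have hsum : ∑ a : 𝒳, seqCount y a = ∑ a : 𝒳, seqCount x a := by
      rw [sum_seqCount, sum_seqCount]
    have heq : ∀ a ∈ Finset.univ, seqCount y a = seqCount x a :=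
      (Finset.sum_eq_sum_iff_of_le (fun a _ => hle a)).mp hsum
    apply h
    simp only [countMismatch]
    apply Finset.sum_eq_zero
    intro a _
    rw [heq a (Finset.mem_univ a)]
    omega

private lemma mismatch_update (x y : Fin n → 𝒳) (i : Fin n) (a : 𝒳)
    (ha : seqCount y a < seqCount x a) (hb : seqCount x (y i) < seqCount y (y i)) :
    countMismatch x (Function.update y i a) + 2 = countMismatch x y := by
  classical
  set b := y i with hbdef
  have hab : a ≠ b := by
    intro hab
    rw [hab] at ha
    omega
  have hcount := seqCount_update y i a
  have hsplit : ∀ g : 𝒳 → ℕ, ∑ c : 𝒳, g c =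
      g a + (g b + ∑ c ∈ (Finset.univ.erase a).erase b, g c) := by
    intro g
    rw [Finset.add_sum_erase _ g (Finset.mem_erase.mpr ⟨Ne.symm hab, Finset.mem_univ b⟩),
      Finset.add_sum_erase _ g (Finset.mem_univ a)]
  have hrest : ∀ c ∈ (Finset.univ.erase a).erase b,
      ((seqCount x c : ℤ) - (seqCount (Function.update y i a) c : ℤ)).natAbs =
      ((seqCount x c : ℤ) - (seqCount y c : ℤ)).natAbs := by
    intro c hc
    simp only [Finset.mem_erase] at hc
    rw [hcount c hab, if_neg hc.2.1, if_neg hc.1]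
    ring_nf
  have hA : ((seqCount x a : ℤ) - (seqCount (Function.update y i a) a : ℤ)).natAbs + 1 =
      ((seqCount x a : ℤ) - (seqCount y a : ℤ)).natAbs := by
    rw [hcount a hab, if_pos rfl, if_neg hab]
    omega
  have hB : ((seqCount x b : ℤ) - (seqCount (Function.update y i a) b : ℤ)).natAbs + 1 =
      ((seqCount x b : ℤ) - (seqCount y b : ℤ)).natAbs := by
    rw [hcount b hab, if_neg (Ne.symm hab), if_pos rfl]
    omega
  simp only [countMismatch]
  rw [hsplit (fun c => ((seqCount x c : ℤ) - (seqCount (Function.update y i a) c : ℤ)).natAbs),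
    hsplit (fun c => ((seqCount x c : ℤ) - (seqCount y c : ℤ)).natAbs),
    Finset.sum_congr rfl hrest]
  omega

/-- Main combinatorial lemma, by strong induction on the mismatch. -/
private lemma exists_perm_aux (x : Fin n → 𝒳) :
    ∀ m : ℕ, ∀ y : Fin n → 𝒳, countMismatch x y ≤ m →
      ∃ (π : Equiv.Perm (Fin n)) (s : Finset (Fin n)),
        2 * s.card ≤ countMismatch x y ∧ ∀ i ∉ s, y (π i) = x i := by
  classical
  intro m
  induction m with
  | zero =>
    intro y hy
    have h0 : countMismatch x y = 0 := Nat.le_zero.mp hy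
    have hcnt : ∀ a, seqCount x a = seqCount y a := by
      intro a
      have := Finset.sum_eq_zero_iff.mp h0 a (Finset.mem_univ a)
      omega
    obtain ⟨π, hπ⟩ := exists_perm_of_counts_eq x y hcnt
    exact ⟨π, ∅, by simp, fun i _ => hπ i⟩
  | succ m ih =>
    intro y hy
    by_cases h0 : countMismatch x y = 0
    · have hcnt : ∀ a, seqCount x a = seqCount y a := by
        intro a
        have := Finset.sum_eq_zero_iff.mp h0 a (Finset.mem_univ a)
        omega
      obtain ⟨π, hπ⟩ := exists_perm_of_counts_eq x y hcnt
      exact ⟨π, ∅, by simp, fun i _ => hπ i⟩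
    · obtain ⟨⟨a, ha⟩, ⟨b, hb⟩⟩ := exists_excess x y h0
      obtain ⟨i, hi⟩ : ∃ i, y i = b := by
        have hpos : 0 < seqCount y b := lt_of_le_of_lt (Nat.zero_le _) hb
        obtain ⟨i, hmem⟩ := Finset.card_pos.mp hpos
        simp only [Finset.mem_filter] at hmem
        exact ⟨i, hmem.2⟩
      have hstep : countMismatch x (Function.update y i a) + 2 = countMismatch x y :=
        mismatch_update x y i a ha (by rwa [hi])
      have hle : countMismatch x (Function.update y i a) ≤ m := by omega
      obtain ⟨π, s, hs, hπ⟩ := ih (Function.update y i a) hle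
      refine ⟨π, insert (π.symm i) s, ?_, ?_⟩
      · have := Finset.card_insert_le (π.symm i) s
        omega
      · intro j hj
        simp only [Finset.mem_insert, not_or] at hj
        have h1 := hπ j hj.2
        have hne : π j ≠ i := fun h => hj.1 (by rw [← h, Equiv.symm_apply_apply])
        rwa [Function.update_of_ne hne] at h1

end Aux2

/-- for two strongly δ-typical sequences `x, y` there is a permutation `π`
of positions and a set of at most `f(x,y)` positions outside of which `π(y)` agrees
with `x`; moreover `f(x,y) ≤ ⌈2δn⌉`. -/
theorem typical_rearrangement {𝒳 : Type*} [Fintype 𝒳] [DecidableEq 𝒳] {n : ℕ}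
    (hn : 0 < n) (p : 𝒳 → ℝ) (hp0 : ∀ a, 0 ≤ p a) (hp1 : ∑ a, p a = 1)
    (δ : ℝ) (hδ : δ ∈ Set.Ioo (0 : ℝ) 1)
    (x y : Fin n → 𝒳) (hx : StronglyTypical p δ x) (hy : StronglyTypical p δ y) :
    (∃ (π : Equiv.Perm (Fin n)) (s : Finset (Fin n)),
        s.card ≤ countMismatch x y ∧ ∀ i ∉ s, y (π i) = x i) ∧
      (countMismatch x y : ℝ) ≤ (⌈2 * δ * (n : ℝ)⌉ : ℝ) := by
  constructor
  · obtain ⟨π, s, hs, hπ⟩ := exists_perm_aux x (countMismatch x y) y le_rfl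
    exact ⟨π, s, by omega, hπ⟩
  · have hnR : (0 : ℝ) < n := by exact_mod_cast hn
    have hterm : ∀ a : 𝒳, (((seqCount x a : ℤ) - (seqCount y a : ℤ)).natAbs : ℝ) ≤
        2 * δ * p a * n := by
      intro a
      have habs : ∀ z : Fin n → 𝒳, StronglyTypical p δ z →
          |(seqCount z a : ℝ) - n * p a| ≤ δ * p a * n := by
        intro z hz
        have h1 := hz a
        have h2 : (seqCount z a : ℝ) - n * p a = n * ((seqCount z a : ℝ) / n - p a) := by
          field_simp
        rw [h2, abs_mul, abs_of_pos hnR]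
        calc (n : ℝ) * |(seqCount z a : ℝ) / n - p a| ≤ n * (δ * p a) := by
              exact mul_le_mul_of_nonneg_left h1 (le_of_lt hnR)
          _ = δ * p a * n := by ring
      have hx' := habs x hx
      have hy' := habs y hy
      have hcast : (((seqCount x a : ℤ) - (seqCount y a : ℤ)).natAbs : ℝ) =
          |(seqCount x a : ℝ) - (seqCount y a : ℝ)| := by
        rw [Nat.cast_natAbs]
        push_cast
        rfl
      rw [hcast]
      calc |(seqCount x a : ℝ) - (seqCount y a : ℝ)|
          = |((seqCount x a : ℝ) - n * p a) - ((seqCount y a : ℝ) - n * p a)| := by ring_nf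
        _ ≤ |(seqCount x a : ℝ) - n * p a| + |(seqCount y a : ℝ) - n * p a| :=
            abs_sub (_ : ℝ) _
        _ ≤ δ * p a * n + δ * p a * n := add_le_add hx' hy'
        _ = 2 * δ * p a * n := by ring
    have hsum : (countMismatch x y : ℝ) ≤ 2 * δ * n := by
      have : (countMismatch x y : ℝ) =
          ∑ a : 𝒳, (((seqCount x a : ℤ) - (seqCount y a : ℤ)).natAbs : ℝ) := by
        simp [countMismatch]
      rw [this]
      calc ∑ a : 𝒳, (((seqCount x a : ℤ) - (seqCount y a : ℤ)).natAbs : ℝ)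
          ≤ ∑ a : 𝒳, 2 * δ * p a * n := Finset.sum_le_sum fun a _ => hterm a
        _ = 2 * δ * n * ∑ a : 𝒳, p a := by rw [Finset.mul_sum]; congr 1; ext a; ring
        _ = 2 * δ * n := by rw [hp1, mul_one]
    exact le_trans hsum (Int.le_ceil _)
end

section
/- For any bipartite state ρ_{AB} on finite-dimensional Hilbert spaces of dimensions |A| and |B|, the infimum defining the key of formation K_F(ρ_{AB}) over finite ensemble decompositions of ρ_{AB} into strictly irreducible generalized private states can be restricted, without changing its value, to ensembles with at most (|A|·|B|)^2 + 1 elements. -/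
open Matrix
open scoped BigOperators ComplexOrder

noncomputable section

namespace KeyCost

/-- A density operator: positive semidefinite with unit trace. -/
def IsDensity {n : Type*} [Fintype n] (M : Matrix n n ℂ) : Prop :=
  M.PosSemidef ∧ M.trace = 1

/-- Von Neumann entropy (base 2), via eigenvalues of a Hermitian matrix. -/
noncomputable def vNEntropy {n : Type*} [Fintype n] [DecidableEq n] (M : Matrix n n ℂ) : ℝ :=
  if h : M.IsHermitian then -∑ i, h.eigenvalues i * Real.logb 2 (h.eigenvalues i) else 0

/-- Matrix logarithm (base 2) of a Hermitian matrix via the spectral theorem. -/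
noncomputable def matLog {n : Type*} [Fintype n] [DecidableEq n] (M : Matrix n n ℂ) : Matrix n n ℂ :=
  if h : M.IsHermitian then
    (h.eigenvectorUnitary : Matrix n n ℂ) *
      Matrix.diagonal (fun i => (Real.logb 2 (h.eigenvalues i) : ℂ)) *
      (h.eigenvectorUnitary : Matrix n n ℂ)ᴴ
  else 0

/-- Quantum relative entropy  D(ρ‖σ) = Tr[ρ (log ρ − log σ)]  (base 2). -/
noncomputable def relEnt {n : Type*} [Fintype n] [DecidableEq n] (ρ σ : Matrix n n ℂ) : ℝ :=
  ((ρ * (matLog ρ - matLog σ)).trace).re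

/-- Partial trace over the second (Bob's) factor. -/
def ptraceRight {α β : Type*} [Fintype β] (M : Matrix (α × β) (α × β) ℂ) : Matrix α α ℂ :=
  Matrix.of fun a a' => ∑ b, M (a, b) (a', b)

/-- Tensor (Kronecker) product of two square matrices, on the product index type. -/
def prodMat {α β : Type*} (A : Matrix α α ℂ) (B : Matrix β β ℂ) : Matrix (α × β) (α × β) ℂ :=
  Matrix.of fun p q => A p.1 q.1 * B p.2 q.2

/-- Separability across the `α : β` cut. -/
def IsSeparable {α β : Type*} [Fintype α] [Fintype β] (σ : Matrix (α × β) (α × β) ℂ) : Prop :=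
  ∃ (m : ℕ) (p : Fin m → ℝ) (a : Fin m → Matrix α α ℂ) (b : Fin m → Matrix β β ℂ),
    (∀ k, 0 ≤ p k) ∧ (∑ k, p k = 1) ∧ (∀ k, IsDensity (a k)) ∧ (∀ k, IsDensity (b k)) ∧
    σ = ∑ k, (p k : ℂ) • prodMat (a k) (b k)

/-- Trace norm of a Hermitian matrix (sum of absolute values of eigenvalues). -/
noncomputable def traceNorm {n : Type*} [Fintype n] [DecidableEq n] (M : Matrix n n ℂ) : ℝ :=
  if h : M.IsHermitian then ∑ i, |h.eigenvalues i| else 0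

/-- Normalized trace distance (1/2)‖ρ − σ‖₁. -/
noncomputable def traceDist {n : Type*} [Fintype n] [DecidableEq n] (ρ σ : Matrix n n ℂ) : ℝ :=
  (1 / 2) * traceNorm (ρ - σ)

/-- Product Kraus operator E ⊗ F. -/
def locKraus {dA dB dA' dB' : Type*} (E : Matrix dA' dA ℂ) (F : Matrix dB' dB ℂ) :
    Matrix (dA' × dB') (dA × dB) ℂ :=
  Matrix.of fun p q => E p.1 q.1 * F p.2 q.2

/-- LOCC channel (modelled by its Kraus decomposition into product operators). -/
def IsLOCC {dA dB dA' dB' : Type*} [Fintype dA] [Fintype dB] [Fintype dA'] [Fintype dB']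
    [DecidableEq dA] [DecidableEq dB] [DecidableEq dA'] [DecidableEq dB']
    (Λ : Matrix (dA × dB) (dA × dB) ℂ → Matrix (dA' × dB') (dA' × dB') ℂ) : Prop :=
  ∃ (m : ℕ) (E : Fin m → Matrix dA' dA ℂ) (F : Fin m → Matrix dB' dB ℂ),
    (∑ x, (locKraus (E x) (F x))ᴴ * locKraus (E x) (F x) = 1) ∧
    ∀ ρ, Λ ρ = ∑ x, locKraus (E x) (F x) * ρ * (locKraus (E x) (F x))ᴴ

/-- The Hilbert space of a private state with key dimension `dk` and shield dimension `ds`: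
Alice holds `Fin dk × Fin ds`, Bob holds `Fin dk × Fin ds`. -/
abbrev SIRSpace (dk ds : ℕ) := (Fin dk × Fin ds) × (Fin dk × Fin ds)

/-- Strictly irreducible private state
`γ = (1/dk) Σ_{i,j} |ii⟩⟨jj| ⊗ U_i ρS U_j†` with each `U_i ρS U_i†` separable. -/
def IsSIR {dk ds : ℕ} (γ : Matrix (SIRSpace dk ds) (SIRSpace dk ds) ℂ) : Prop :=
  ∃ (U : Fin dk → Matrix (Fin ds × Fin ds) (Fin ds × Fin ds) ℂ)
    (ρS : Matrix (Fin ds × Fin ds) (Fin ds × Fin ds) ℂ),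
    (∀ i, U i ∈ Matrix.unitaryGroup (Fin ds × Fin ds) ℂ) ∧
    IsDensity ρS ∧
    (∀ i, IsSeparable (U i * ρS * (U i)ᴴ)) ∧
    ∀ p q : SIRSpace dk ds,
      γ p q =
        if p.1.1 = p.2.1 ∧ q.1.1 = q.2.1 then
          (1 / (dk : ℂ)) * (U p.1.1 * ρS * (U q.1.1)ᴴ) (p.1.2, p.2.2) (q.1.2, q.2.2)
        else 0

/-- One-shot key cost. -/
noncomputable def KCone {dA dB : Type*} [Fintype dA] [Fintype dB] [DecidableEq dA] [DecidableEq dB]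
    (ε : ℝ) (ρ : Matrix (dA × dB) (dA × dB) ℂ) : ℝ :=
  sInf {r : ℝ | ∃ (dk ds : ℕ) (γ : Matrix (SIRSpace dk ds) (SIRSpace dk ds) ℂ)
      (Λ : Matrix (SIRSpace dk ds) (SIRSpace dk ds) ℂ → Matrix (dA × dB) (dA × dB) ℂ),
      IsSIR γ ∧ IsLOCC Λ ∧ traceDist (Λ γ) ρ ≤ ε ∧ r = Real.logb 2 dk}

/-- One-shot distillable key. -/
noncomputable def KDone {dA dB : Type*} [Fintype dA] [Fintype dB] [DecidableEq dA] [DecidableEq dB]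
    (ε : ℝ) (ρ : Matrix (dA × dB) (dA × dB) ℂ) : ℝ :=
  sSup {r : ℝ | ∃ (dk ds : ℕ) (γ : Matrix (SIRSpace dk ds) (SIRSpace dk ds) ℂ)
      (Λ : Matrix (dA × dB) (dA × dB) ℂ → Matrix (SIRSpace dk ds) (SIRSpace dk ds) ℂ),
      IsSIR γ ∧ IsLOCC Λ ∧ traceDist (Λ ρ) γ ≤ ε ∧ r = Real.logb 2 dk}

/-- n-fold tensor power of a bipartite state, with the bipartite cut `A^n : B^n`. -/
def powState {dA dB : Type*} [Fintype dA] [Fintype dB]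
    (ρ : Matrix (dA × dB) (dA × dB) ℂ) (n : ℕ) :
    Matrix ((Fin n → dA) × (Fin n → dB)) ((Fin n → dA) × (Fin n → dB)) ℂ :=
  Matrix.of fun p q => ∏ i, ρ (p.1 i, p.2 i) (q.1 i, q.2 i)

/-- Asymptotic key cost. -/
noncomputable def KCost {dA dB : Type*} [Fintype dA] [Fintype dB] [DecidableEq dA] [DecidableEq dB]
    (ρ : Matrix (dA × dB) (dA × dB) ℂ) : ℝ :=
  ⨆ ε ∈ Set.Ioo (0 : ℝ) 1,
    Filter.limsup (fun n : ℕ => KCone ε (powState ρ n) / n) Filter.atTop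

/-- Relative entropy of entanglement. -/
noncomputable def ER {α β : Type*} [Fintype α] [Fintype β] [DecidableEq α] [DecidableEq β]
    (ρ : Matrix (α × β) (α × β) ℂ) : ℝ :=
  sInf {x : ℝ | ∃ σ : Matrix (α × β) (α × β) ℂ, IsSeparable σ ∧ x = relEnt ρ σ}

/-- ε-hypothesis-testing relative entropy. -/
noncomputable def Dh {n : Type*} [Fintype n] [DecidableEq n] (ε : ℝ) (ρ σ : Matrix n n ℂ) : ℝ :=
  -Real.logb 2 (sInf {x : ℝ | ∃ Λ : Matrix n n ℂ, Λ.PosSemidef ∧ (1 - Λ).PosSemidef ∧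
      1 - ε ≤ ((Λ * ρ).trace).re ∧ x = ((Λ * σ).trace).re})

/-- A strictly irreducible generalized private state with key-part entropy `h`:
up to local unitaries and index reshuffling it has the canonical twisted form
`Σ_{i,j} √(μ_i μ_j) |e_i f_i⟩⟨e_j f_j| ⊗ U_i ρS U_j†` with separable conditional shields. -/
def IsGSIRwithEnt {dA dB : Type*} [Fintype dA] [Fintype dB] [DecidableEq dA] [DecidableEq dB]
    (γ : Matrix (dA × dB) (dA × dB) ℂ) (h : ℝ) : Prop :=
  ∃ (k sA sB : ℕ) (eA : dA ≃ Fin k × Fin sA) (eB : dB ≃ Fin k × Fin sB)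
    (VA : Matrix dA dA ℂ) (VB : Matrix dB dB ℂ)
    (μ : Fin k → ℝ) (U : Fin k → Matrix (Fin sA × Fin sB) (Fin sA × Fin sB) ℂ)
    (ρS : Matrix (Fin sA × Fin sB) (Fin sA × Fin sB) ℂ),
    VA ∈ Matrix.unitaryGroup dA ℂ ∧ VB ∈ Matrix.unitaryGroup dB ℂ ∧
    (∀ i, 0 ≤ μ i) ∧ (∑ i, μ i = 1) ∧
    (∀ i, U i ∈ Matrix.unitaryGroup (Fin sA × Fin sB) ℂ) ∧
    IsDensity ρS ∧
    (∀ i, IsSeparable (U i * ρS * (U i)ᴴ)) ∧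
    (∀ p q : dA × dB,
      (prodMat VA VB * γ * (prodMat VA VB)ᴴ) p q =
        if (eA p.1).1 = (eB p.2).1 ∧ (eA q.1).1 = (eB q.2).1 then
          (Real.sqrt (μ (eA p.1).1 * μ (eA q.1).1) : ℂ) *
            (U (eA p.1).1 * ρS * (U (eA q.1).1)ᴴ) ((eA p.1).2, (eB p.2).2) ((eA q.1).2, (eB q.2).2)
        else 0) ∧
    h = -∑ i, μ i * Real.logb 2 (μ i)

/-- A strictly irreducible generalized private state. -/
def IsGSIR {dA dB : Type*} [Fintype dA] [Fintype dB] [DecidableEq dA] [DecidableEq dB]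
    (γ : Matrix (dA × dB) (dA × dB) ℂ) : Prop :=
  ∃ h, IsGSIRwithEnt γ h

/-- Key of formation: infimum of the average key-part entropy over finite decompositions
into strictly irreducible generalized private states. -/
noncomputable def KF {dA dB : Type*} [Fintype dA] [Fintype dB] [DecidableEq dA] [DecidableEq dB]
    (ρ : Matrix (dA × dB) (dA × dB) ℂ) : ℝ :=
  sInf {r : ℝ | ∃ (N : ℕ) (p : Fin N → ℝ) (γ : Fin N → Matrix (dA × dB) (dA × dB) ℂ)
      (h : Fin N → ℝ),
      (∀ k, 0 ≤ p k) ∧ (∑ k, p k = 1) ∧ (∀ k, IsDensity (γ k)) ∧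
      (∀ k, IsGSIRwithEnt (γ k) (h k)) ∧ (∑ k, (p k : ℂ) • γ k = ρ) ∧
      r = ∑ k, p k * h k}


/-- Two Hermitian matrices with equal traces that agree in the "real coordinates"
`re + im` of every entry except possibly the `(i₀, i₀)` one are equal. -/
private lemma herm_ext_aux {n : Type*} [Fintype n] [DecidableEq n] (i₀ : n)
    {A B : Matrix n n ℂ} (hA : A.IsHermitian) (hB : B.IsHermitian)
    (htr : A.trace = B.trace)
    (hg : ∀ a b : n, (a, b) ≠ (i₀, i₀) →
      (A a b).re + (A a b).im = (B a b).re + (B a b).im) :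
    A = B := by
  have key : ∀ a b : n, (a, b) ≠ (i₀, i₀) → A a b = B a b := by
    intro a b hab
    by_cases hd : a = b
    · subst hd
      have hAim : (A a a).im = 0 := by
        have := hA.apply a a
        exact Complex.conj_eq_iff_im.mp (by simpa [Complex.star_def] using this)
      have hBim : (B a a).im = 0 := by
        have := hB.apply a a
        exact Complex.conj_eq_iff_im.mp (by simpa [Complex.star_def] using this)
      have h1 := hg a a hab
      rw [hAim, hBim] at h1
      exact Complex.ext (by linarith) (by rw [hAim, hBim])
    · have h1 := hg a b hab
      have h2 := hg b a (by
        simp only [ne_eq, Prod.mk.injEq, not_and]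
        intro hb ha
        exact hd (ha.trans hb.symm))
      have eA : A b a = star (A a b) := (hA.apply b a).symm
      have eB : B b a = star (B a b) := (hB.apply b a).symm
      rw [eA, eB] at h2
      simp only [Complex.star_def, Complex.conj_re, Complex.conj_im] at h2
      exact Complex.ext (by linarith) (by linarith)
  ext a b
  by_cases hab : (a, b) = (i₀, i₀)
  · have ha : a = i₀ := congrArg Prod.fst hab
    have hb : b = i₀ := congrArg Prod.snd hab
    rw [ha, hb]
    have hsum : ∑ i, (A i i - B i i) = 0 := by
      rw [Finset.sum_sub_distrib]
      rw [show (∑ i, A i i) = A.trace from rfl, show (∑ i, B i i) = B.trace from rfl,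
        htr, sub_self]
    have hsingle : ∑ i, (A i i - B i i) = A i₀ i₀ - B i₀ i₀ :=
      Finset.sum_eq_single i₀
        (fun c _ hc => by rw [key c c (by simp [Prod.ext_iff, hc])]; ring)
        (by intro hmem; exact absurd (Finset.mem_univ i₀) hmem)
    have : A i₀ i₀ - B i₀ i₀ = 0 := hsingle ▸ hsum
    exact sub_eq_zero.mp this
  · exact key a b hab

/-- Linearity of the real coordinates of entries under real convex combinations. -/
private lemma g_combo_aux {n : Type*} [Fintype n] {N : Type*} [Fintype N]
    (c : N → ℝ) (γ : N → Matrix n n ℂ) (a b : n) :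
    ((∑ k, (c k : ℂ) • γ k) a b).re + ((∑ k, (c k : ℂ) • γ k) a b).im
      = ∑ k, c k * ((γ k a b).re + (γ k a b).im) := by
  simp only [Matrix.sum_apply, Matrix.smul_apply, smul_eq_mul, Complex.re_sum, Complex.im_sum,
    Complex.mul_re, Complex.mul_im, Complex.ofReal_re, Complex.ofReal_im, zero_mul, mul_zero,
    sub_zero, add_zero, zero_add]
  rw [← Finset.sum_add_distrib]
  exact Finset.sum_congr rfl fun k _ => by ring

/-- the infimum defining the key of formation can be restricted to
ensembles with at most `(|A|·|B|)² + 1` elements without changing its value. -/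
theorem KF_caratheodory {dA dB : Type*} [Fintype dA] [Fintype dB] [DecidableEq dA] [DecidableEq dB]
    (ρ : Matrix (dA × dB) (dA × dB) ℂ) (hρ : IsDensity ρ) :
    KF ρ =
      sInf {r : ℝ | ∃ (N : ℕ) (p : Fin N → ℝ) (γ : Fin N → Matrix (dA × dB) (dA × dB) ℂ)
        (h : Fin N → ℝ),
        N ≤ (Fintype.card dA * Fintype.card dB) ^ 2 + 1 ∧
        (∀ k, 0 ≤ p k) ∧ (∑ k, p k = 1) ∧ (∀ k, IsDensity (γ k)) ∧
        (∀ k, IsGSIRwithEnt (γ k) (h k)) ∧ (∑ k, (p k : ℂ) • γ k = ρ) ∧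
        r = ∑ k, p k * h k} := by
  unfold KF
  congr 1
  apply Set.Subset.antisymm
  · rintro r ⟨N, p, γ, h, hp0, hp1, hdens, hgsir, hsum, hr⟩
    -- the underlying space is nonempty since ρ has trace one
    have hne : Nonempty (dA × dB) := by
      rcases isEmpty_or_nonempty (dA × dB) with hE | hN
      · exfalso
        have h0 : ρ.trace = 0 := by simp [Matrix.trace]
        rw [hρ.2] at h0
        exact one_ne_zero h0
      · exact hN
    obtain ⟨i₀⟩ := hne
    -- coordinates: all entries (via re + im) except the (i₀,i₀) one, plus the entropy
    let T := {x : (dA × dB) × (dA × dB) // x ≠ (i₀, i₀)}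
    let F := (T → ℝ) × ℝ
    let g : Matrix (dA × dB) (dA × dB) ℂ → T → ℝ :=
      fun M x => (M x.1.1 x.1.2).re + (M x.1.1 x.1.2).im
    let v : Fin N → F := fun k => (g (γ k), h k)
    have hzmem : (∑ k, p k • v k) ∈ convexHull ℝ (Set.range v) := by
      have hmem := Finset.centerMass_mem_convexHull (Finset.univ (α := Fin N))
        (w := p) (z := v) (fun i _ => hp0 i) (by rw [hp1]; norm_num)
        (fun i _ => Set.mem_range_self i)
      rwa [Finset.centerMass_eq_of_sum_1 _ _ hp1] at hmem
    obtain ⟨ι, hι, zf, w, hrange, haff, hwpos, hwsum, hwz⟩ :=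
      eq_pos_convex_span_of_mem_convexHull hzmem
    choose kf hkf using fun i : ι => hrange (Set.mem_range_self (f := zf) i)
    -- Carathéodory cardinality bound
    have hcard : Fintype.card ι ≤ (Fintype.card dA * Fintype.card dB) ^ 2 + 1 := by
      have h1 := haff.card_le_finrank_succ
      have hposn : 0 < Fintype.card (dA × dB) := Fintype.card_pos_iff.mpr ⟨i₀⟩
      have hcT : Fintype.card T = (Fintype.card dA * Fintype.card dB) ^ 2 - 1 := by
        have hc1 : Fintype.card T = Fintype.card ((dA × dB) × (dA × dB)) -
            Fintype.card {x : (dA × dB) × (dA × dB) // x = (i₀, i₀)} :=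
          Fintype.card_subtype_compl _
        rw [hc1, Fintype.card_subtype_eq, Fintype.card_prod, Fintype.card_prod, sq]
      have h3 : Module.finrank ℝ F = (Fintype.card dA * Fintype.card dB) ^ 2 := by
        show Module.finrank ℝ ((T → ℝ) × ℝ) = _
        rw [Module.finrank_prod, Module.finrank_fintype_fun_eq_card, Module.finrank_self, hcT]
        have hone : 1 ≤ (Fintype.card dA * Fintype.card dB) ^ 2 := by
          have h0 : 0 < Fintype.card dA * Fintype.card dB := by
            rw [← Fintype.card_prod]; exact hposn
          exact Nat.one_le_pow _ _ h0
        omega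
      exact le_trans h1 (Nat.add_le_add_right
        (le_trans (Submodule.finrank_le _) (le_of_eq h3)) 1)
    set e : Fin (Fintype.card ι) ≃ ι := (Fintype.equivFin ι).symm with he
    -- the reduced combination, rewritten through kf
    have hwz' : ∑ i : ι, w i • v (kf i) = ∑ k, p k • v k := by
      rw [show (fun i : ι => w i • v (kf i)) = fun i : ι => w i • zf i from
        funext fun i => by rw [hkf]]
      exact hwz
    -- the reduced matrix equals ρ
    have hM : (∑ i : ι, ((w i : ℂ)) • γ (kf i)) = ρ := by
      have hMH : (∑ i : ι, ((w i : ℂ)) • γ (kf i)).IsHermitian := by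
        show (∑ i : ι, ((w i : ℂ)) • γ (kf i))ᴴ = _
        rw [Matrix.conjTranspose_sum]
        refine Finset.sum_congr rfl fun i _ => ?_
        rw [Matrix.conjTranspose_smul, (hdens (kf i)).1.1]
        congr 1
        simp [Complex.star_def, Complex.conj_ofReal]
      have hMtr : (∑ i : ι, ((w i : ℂ)) • γ (kf i)).trace = 1 := by
        rw [Matrix.trace_sum]
        have : ∀ i : ι, (((w i : ℂ)) • γ (kf i)).trace = ((w i : ℝ) : ℂ) := by
          intro i
          rw [Matrix.trace_smul, (hdens (kf i)).2, smul_eq_mul, mul_one]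
        rw [Finset.sum_congr rfl fun i _ => this i]
        rw [show (∑ i : ι, ((w i : ℝ) : ℂ)) = ((∑ i : ι, w i : ℝ) : ℂ) by push_cast; rfl,
          hwsum, Complex.ofReal_one]
      refine herm_ext_aux i₀ hMH hρ.1.1 (by rw [hMtr, hρ.2]) ?_
      intro a b hab
      have hc := congrArg (fun q : F => q.1 ⟨(a, b), hab⟩) hwz'
      simp only [F, T, v, g, Prod.fst_sum, Finset.sum_apply, Prod.smul_fst, Pi.smul_apply,
        smul_eq_mul] at hc
      rw [g_combo_aux, ← hsum, g_combo_aux]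
      exact hc
    -- the reduced average entropy equals the original one
    have hent : ∑ i : ι, w i * h (kf i) = ∑ k, p k * h k := by
      have hc := congrArg (fun q : F => q.2) hwz'
      simpa only [F, T, v, Prod.snd_sum, Prod.smul_snd, smul_eq_mul] using hc
    refine ⟨Fintype.card ι, fun j => w (e j), fun j => γ (kf (e j)),
      fun j => h (kf (e j)), hcard, fun j => (hwpos _).le, ?_, fun j => hdens _,
      fun j => hgsir _, ?_, ?_⟩
    · exact (Equiv.sum_comp e w).trans hwsum
    · rw [← hM]
      exact Equiv.sum_comp e (fun i : ι => ((w i : ℂ)) • γ (kf i))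
    · rw [hr, ← hent]
      exact (Equiv.sum_comp e (fun i : ι => w i * h (kf i))).symm
  · rintro r ⟨N, p, γ, h, _, hp0, hp1, hdens, hgsir, hsum, hr⟩
    exact ⟨N, p, γ, h, hp0, hp1, hdens, hgsir, hsum, hr⟩

end KeyCost
end
end

section
/- Let γ = U(Φ⁺_{d_k} ⊗ ρ_{A'B'})U† be a strictly irreducible private state with twisting U = Σ_i |ii⟩⟨ii|⊗U_i and each U_i ρ U_i† separable, and fix ε ∈ [0,1]. Then the ε-hypothesis-testing relative entropy of entanglement satisfies inf_{σ ∈ SEP} D_h^ε(γ ∥ σ) ≤ log₂ d_k − log₂(1 − ε). -/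
/-!
Write `γ = (1/d_k) ∑_{i,j} B_i ρ B_jᴴ` with `B_i = (|ii⟩ ⊗ 𝟙) U_i`, and take
`σ = (1/d_k) ∑_i B_i ρ B_iᴴ`, which is separable because every `U_i ρ U_iᴴ` is and `|ii⟩ ⊗ 𝟙` is a
local isometry. Since `∑_{i,j} (B_i - B_j) ρ (B_i - B_j)ᴴ ≥ 0`, the operator inequality
`γ ≤ d_k σ` holds, so every test with `Tr[Λγ] ≥ 1 - ε` has `Tr[Λσ] ≥ (1 - ε)/d_k`, i.e.
`D_h^ε(γ‖σ) ≤ log₂ d_k - log₂(1 - ε)`.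
-/

open Matrix
open scoped BigOperators ComplexOrder

noncomputable section

namespace KeyCost

open scoped Kronecker

lemma prodMat_eq_kronecker {α β : Type*} (A : Matrix α α ℂ) (B : Matrix β β ℂ) :
    prodMat A B = A ⊗ₖ B := rfl

lemma locKraus_eq_kronecker {α β α' β' : Type*} (E : Matrix α' α ℂ) (F : Matrix β' β ℂ) :
    locKraus E F = E ⊗ₖ F := rfl

section PosSemidef

variable {𝕜 n : Type*} [RCLike 𝕜] [Fintype n]

lemma re_trace_mul_nonneg {A B : Matrix n n 𝕜} (hA : A.PosSemidef) (hB : B.PosSemidef) :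
    0 ≤ RCLike.re (A * B).trace := by
  classical
  obtain ⟨C, rfl⟩ : ∃ C : Matrix n n 𝕜, B = Cᴴ * C := by
    open scoped MatrixOrder in exact CStarAlgebra.nonneg_iff_eq_star_mul_self.mp hB.nonneg
  rw [← mul_assoc, trace_mul_cycle]
  exact (RCLike.nonneg_iff.mp (hA.mul_mul_conjTranspose_same C).trace_nonneg).1

lemma re_trace_mul_le_of_posSemidef_sub {Λ A B : Matrix n n 𝕜} (hΛ : Λ.PosSemidef)
    (hAB : (B - A).PosSemidef) : RCLike.re (Λ * A).trace ≤ RCLike.re (Λ * B).trace := by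
  have h := re_trace_mul_nonneg hΛ hAB
  rwa [mul_sub, trace_sub, map_sub, sub_nonneg] at h

lemma posSemidef_card_smul_sum_sub_sum_sum {ι m : Type*} [Fintype ι] [Fintype m]
    (B : ι → Matrix m n 𝕜) {ρ : Matrix n n 𝕜} (hρ : ρ.PosSemidef) :
    ((Fintype.card ι : 𝕜) • ∑ i, B i * ρ * (B i)ᴴ - ∑ i, ∑ j, B i * ρ * (B j)ᴴ).PosSemidef := by
  have hsq : ∀ i j, (B i - B j) * ρ * (B i - B j)ᴴ =
      B i * ρ * (B i)ᴴ + B j * ρ * (B j)ᴴ - (B i * ρ * (B j)ᴴ + B j * ρ * (B i)ᴴ) := by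
    intro i j
    simp only [conjTranspose_sub, Matrix.sub_mul, Matrix.mul_sub]
    abel
  have hsum : ∑ i, ∑ j, (B i - B j) * ρ * (B i - B j)ᴴ =
      (2 : ℝ) • ((Fintype.card ι : 𝕜) • ∑ i, B i * ρ * (B i)ᴴ - ∑ i, ∑ j, B i * ρ * (B j)ᴴ) := by
    simp only [hsq, Finset.sum_sub_distrib, Finset.sum_add_distrib, Finset.sum_const,
      Finset.card_univ, ← Finset.smul_sum]
    rw [Finset.sum_comm (f := fun i j => B j * ρ * (B i)ᴴ)]
    simp only [← Nat.cast_smul_eq_nsmul 𝕜]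
    module
  have hpsd : (∑ i, ∑ j, (B i - B j) * ρ * (B i - B j)ᴴ).PosSemidef :=
    posSemidef_sum _ fun i _ => posSemidef_sum _ fun j _ => hρ.mul_mul_conjTranspose_same _
  rw [hsum] at hpsd
  simpa [smul_smul] using hpsd.smul (show (0 : ℝ) ≤ 2⁻¹ by norm_num)

end PosSemidef

section Separable

variable {α β : Type*} [Fintype α] [Fintype β]

lemma IsDensity.kronecker {a : Matrix α α ℂ} {b : Matrix β β ℂ} (ha : IsDensity a)
    (hb : IsDensity b) : IsDensity (a ⊗ₖ b) :=
  ⟨ha.1.kronecker hb.1, by rw [trace_kronecker, ha.2, hb.2, one_mul]⟩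

lemma IsDensity.mul_mul_conjTranspose_isometry {α' : Type*} [Fintype α'] [DecidableEq α]
    {a : Matrix α α ℂ} (ha : IsDensity a) {V : Matrix α' α ℂ} (hV : Vᴴ * V = 1) :
    IsDensity (V * a * Vᴴ) :=
  ⟨ha.1.mul_mul_conjTranspose_same V, by rw [trace_mul_cycle, hV, one_mul, ha.2]⟩

lemma IsSeparable.isDensity {σ : Matrix (α × β) (α × β) ℂ} (h : IsSeparable σ) :
    IsDensity σ := by
  obtain ⟨m, p, a, b, hp, hp1, ha, hb, rfl⟩ := h
  refine ⟨posSemidef_sum _ fun k _ => ((ha k).kronecker (hb k)).1.smul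
    (Complex.zero_le_real.mpr (hp k)), ?_⟩
  simp only [trace_sum, trace_smul, prodMat_eq_kronecker, ((ha _).kronecker (hb _)).2,
    smul_eq_mul, mul_one]
  exact_mod_cast hp1

lemma IsSeparable.sum_smul {ι : Type*} [Fintype ι] {c : ι → ℝ} (hc : ∀ i, 0 ≤ c i)
    (hc1 : ∑ i, c i = 1) {σ : ι → Matrix (α × β) (α × β) ℂ} (hσ : ∀ i, IsSeparable (σ i)) :
    IsSeparable (∑ i, (c i : ℂ) • σ i) := by
  choose m p a b hp hp1 ha hb hdec using hσ
  let e := (Fintype.equivFin (Σ i, Fin (m i))).symm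
  refine ⟨Fintype.card (Σ i, Fin (m i)), fun k => c (e k).1 * p _ (e k).2,
    fun k => a _ (e k).2, fun k => b _ (e k).2, fun k => mul_nonneg (hc _) (hp _ _), ?_,
    fun k => ha _ _, fun k => hb _ _, ?_⟩
  · rw [e.sum_comp (fun x => c x.1 * p x.1 x.2), ← Finset.univ_sigma_univ, Finset.sum_sigma]
    simp_rw [← Finset.mul_sum, hp1, mul_one, hc1]
  · rw [e.sum_comp (fun x => ((c x.1 * p x.1 x.2 : ℝ) : ℂ) • prodMat (a x.1 x.2) (b x.1 x.2)),
      ← Finset.univ_sigma_univ, Finset.sum_sigma]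
    simp_rw [hdec, Finset.smul_sum, smul_smul, Complex.ofReal_mul]

lemma IsSeparable.locKraus_mul_mul_conjTranspose {α' β' : Type*} [Fintype α'] [Fintype β']
    [DecidableEq α] [DecidableEq β] {σ : Matrix (α × β) (α × β) ℂ} (h : IsSeparable σ)
    {E : Matrix α' α ℂ} {F : Matrix β' β ℂ} (hE : Eᴴ * E = 1) (hF : Fᴴ * F = 1) :
    IsSeparable (locKraus E F * σ * (locKraus E F)ᴴ) := by
  obtain ⟨m, p, a, b, hp, hp1, ha, hb, rfl⟩ := h
  refine ⟨m, p, fun k => E * a k * Eᴴ, fun k => F * b k * Fᴴ, hp, hp1,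
    fun k => (ha k).mul_mul_conjTranspose_isometry hE,
    fun k => (hb k).mul_mul_conjTranspose_isometry hF, ?_⟩
  simp only [Matrix.mul_sum, Matrix.sum_mul, Matrix.mul_smul, Matrix.smul_mul,
    locKraus_eq_kronecker, prodMat_eq_kronecker, conjTranspose_kronecker, mul_kronecker_mul]

end Separable

section HypothesisTesting

variable {n : Type*} [Fintype n] [DecidableEq n]

/-- The type-II errors `Tr[Λσ]` of the tests `0 ≤ Λ ≤ 1` whose type-I error is at most `ε`. -/
def typeIIErrors (ε : ℝ) (ρ σ : Matrix n n ℂ) : Set ℝ :=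
  {x : ℝ | ∃ Λ : Matrix n n ℂ, Λ.PosSemidef ∧ (1 - Λ).PosSemidef ∧
      1 - ε ≤ ((Λ * ρ).trace).re ∧ x = ((Λ * σ).trace).re}

lemma Dh_eq (ε : ℝ) (ρ σ : Matrix n n ℂ) :
    Dh ε ρ σ = -Real.logb 2 (sInf (typeIIErrors ε ρ σ)) := rfl

variable {ε : ℝ} {ρ σ : Matrix n n ℂ}

lemma nonneg_of_mem_typeIIErrors (hσ : σ.PosSemidef) {x : ℝ} (hx : x ∈ typeIIErrors ε ρ σ) :
    0 ≤ x := by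
  obtain ⟨Λ, hΛ, -, -, rfl⟩ := hx
  exact re_trace_mul_nonneg hΛ hσ

lemma Dh_nonneg (hσ : IsDensity σ) : 0 ≤ Dh ε ρ σ := by
  have hnonneg : ∀ x ∈ typeIIErrors ε ρ σ, 0 ≤ x := fun _ => nonneg_of_mem_typeIIErrors hσ.1
  have hle : sInf (typeIIErrors ε ρ σ) ≤ 1 := by
    rcases (typeIIErrors ε ρ σ).eq_empty_or_nonempty with hS | ⟨x, hx⟩
    · rw [hS, Real.sInf_empty]
      exact zero_le_one
    · refine (csInf_le ⟨0, hnonneg⟩ hx).trans ?_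
      obtain ⟨Λ, -, hΛ1, -, rfl⟩ := hx
      have h := re_trace_mul_nonneg hΛ1 hσ.1
      rw [Matrix.sub_mul, one_mul, trace_sub, hσ.2, map_sub, RCLike.one_re, sub_nonneg] at h
      exact h
  rw [Dh_eq, neg_nonneg]
  exact Real.logb_nonpos one_lt_two (Real.sInf_nonneg hnonneg) hle

/-- One-shot form of `D_h^ε ≤ D_max - log(1 - ε)`. -/
lemma Dh_le_logb_sub_logb_of_posSemidef_smul_sub (hσ : σ.PosSemidef) {c : ℝ} (hc : 1 ≤ c)
    (hε : ε ∈ Set.Icc (0 : ℝ) 1) (hρσ : ((c : ℂ) • σ - ρ).PosSemidef) :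
    Dh ε ρ σ ≤ Real.logb 2 c - Real.logb 2 (1 - ε) := by
  set S := typeIIErrors ε ρ σ
  have hnonneg : ∀ x ∈ S, 0 ≤ x := fun x => nonneg_of_mem_typeIIErrors hσ
  rcases (Real.sInf_nonneg hnonneg).eq_or_lt with hS | hS
  · rw [Dh_eq, ← hS, Real.logb_zero, neg_zero, sub_nonneg]
    exact (Real.logb_nonpos one_lt_two (by linarith [hε.2]) (by linarith [hε.1])).trans
      (Real.logb_nonneg one_lt_two hc)
  have hε1 : ε < 1 := by
    refine hε.2.lt_of_ne fun h => hS.not_ge (csInf_le ⟨0, hnonneg⟩ ?_)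
    exact ⟨0, .zero, by simpa using PosSemidef.one, by simp [h], by simp⟩
  have hlow : (1 - ε) / c ≤ sInf S := by
    refine le_csInf (Set.nonempty_iff_ne_empty.mpr fun h => by simp [h] at hS) ?_
    rintro _ ⟨Λ, hΛ, -, hΛρ, rfl⟩
    have h := re_trace_mul_le_of_posSemidef_sub hΛ hρσ
    rw [mul_smul_comm, trace_smul, smul_eq_mul, RCLike.re_to_complex, RCLike.re_to_complex,
      Complex.re_ofReal_mul] at h
    rw [div_le_iff₀ (by linarith)]
    linarith
  calc -Real.logb 2 (sInf S)
      ≤ -Real.logb 2 ((1 - ε) / c) :=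
        neg_le_neg (Real.logb_le_logb_of_le one_lt_two (by apply div_pos <;> linarith) hlow)
    _ = Real.logb 2 c - Real.logb 2 (1 - ε) := by
        rw [Real.logb_div (by linarith) (by linarith), neg_sub]

end HypothesisTesting

section KeyIsometry

variable {κ : Type*} (ι ι' : Type*) [DecidableEq κ] [DecidableEq ι] [DecidableEq ι']

/-- The isometry `|i⟩ ⊗ 𝟙` from a shield system into key branch `i`. -/
def keyIsometry (i : κ) : Matrix (κ × ι) ι ℂ :=
  Matrix.of fun p t => if p = (i, t) then 1 else 0

/-- The local isometry `|ii⟩ ⊗ 𝟙` from a bipartite shield into the key branch `|ii⟩`. -/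
def keyEmbedding (i : κ) : Matrix ((κ × ι) × (κ × ι')) (ι × ι') ℂ :=
  locKraus (keyIsometry ι i) (keyIsometry ι' i)

variable [Fintype ι] [Fintype ι'] {ι ι'}

lemma keyIsometry_conjTranspose_mul [Fintype κ] (i : κ) :
    (keyIsometry ι i)ᴴ * keyIsometry ι i = 1 := by
  ext s t
  simp [keyIsometry, mul_apply, one_apply, eq_comm]

lemma keyEmbedding_mul_mul_conjTranspose_apply (i j : κ)
    (M : Matrix (ι × ι') (ι × ι') ℂ) (p q : (κ × ι) × (κ × ι')) :
    (keyEmbedding ι ι' i * M * (keyEmbedding ι ι' j)ᴴ) p q =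
      if (p.1.1 = i ∧ p.2.1 = i) ∧ (q.1.1 = j ∧ q.2.1 = j) then
        M (p.1.2, p.2.2) (q.1.2, q.2.2) else 0 := by
  obtain ⟨⟨a, s⟩, b, t⟩ := p
  obtain ⟨⟨c, u⟩, d, v⟩ := q
  by_cases ha : a = i <;> by_cases hb : b = i <;> by_cases hc : c = j <;> by_cases hd : d = j <;>
    simp [keyEmbedding, locKraus, keyIsometry, mul_apply, Fintype.sum_prod_type, ha, hb, hc, hd,
      apply_ite (starRingEnd ℂ), mul_ite, Finset.sum_ite_eq]

lemma eq_sum_sum_keyEmbedding [Fintype κ]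
    {γ : Matrix ((κ × ι) × (κ × ι')) ((κ × ι) × (κ × ι')) ℂ}
    {T : κ → κ → Matrix (ι × ι') (ι × ι') ℂ}
    (hγ : ∀ p q, γ p q = if p.1.1 = p.2.1 ∧ q.1.1 = q.2.1 then
      T p.1.1 q.1.1 (p.1.2, p.2.2) (q.1.2, q.2.2) else 0) :
    γ = ∑ i, ∑ j, keyEmbedding ι ι' i * T i j * (keyEmbedding ι ι' j)ᴴ := by
  ext ⟨⟨a, s⟩, b, t⟩ ⟨⟨c, u⟩, d, v⟩
  by_cases hab : a = b <;> by_cases hcd : c = d <;>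
    simp [Matrix.sum_apply, keyEmbedding_mul_mul_conjTranspose_apply, hγ, hab, hcd, ite_and,
      eq_comm]

lemma IsSeparable.keyEmbedding_mul_mul_conjTranspose [Fintype κ]
    {M : Matrix (ι × ι') (ι × ι') ℂ} (hM : IsSeparable M) (i : κ) :
    IsSeparable (keyEmbedding ι ι' i * M * (keyEmbedding ι ι' i)ᴴ) :=
  hM.locKraus_mul_mul_conjTranspose (keyIsometry_conjTranspose_mul i)
    (keyIsometry_conjTranspose_mul i)

end KeyIsometry

theorem sir_hypothesis_testing_bound_general (dk ds : ℕ) (hdk : 1 ≤ dk)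
    (γ : Matrix (SIRSpace dk ds) (SIRSpace dk ds) ℂ) (hγ : IsSIR γ)
    (ε : ℝ) (hε : ε ∈ Set.Icc (0 : ℝ) 1) :
    sInf {x : ℝ | ∃ σ : Matrix (SIRSpace dk ds) (SIRSpace dk ds) ℂ,
        IsSeparable σ ∧ x = Dh ε γ σ} ≤
      Real.logb 2 dk - Real.logb 2 (1 - ε) := by
  obtain ⟨U, ρS, -, hρS, hsep, hγU⟩ := hγ
  set c : ℝ := (dk : ℝ)⁻¹
  set B := fun i => keyEmbedding (Fin ds) (Fin ds) i * U i
  have hB : ∀ i j, B i * ρS * (B j)ᴴ = keyEmbedding (Fin ds) (Fin ds) i *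
      (U i * ρS * (U j)ᴴ) * (keyEmbedding (Fin ds) (Fin ds) j)ᴴ := by
    simp [B, conjTranspose_mul, Matrix.mul_assoc]
  have hγB : γ = ∑ i, ∑ j, (c : ℂ) • (B i * ρS * (B j)ᴴ) := by
    rw [eq_sum_sum_keyEmbedding (γ := γ) (T := fun i j => (c : ℂ) • (U i * ρS * (U j)ᴴ))
      fun p q => by simp [hγU, c, div_eq_inv_mul]]
    simp only [hB, Matrix.mul_smul, Matrix.smul_mul]
  set σ := ∑ i, (c : ℂ) • (B i * ρS * (B i)ᴴ)
  have hσ : IsSeparable σ := by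
    refine IsSeparable.sum_smul (fun _ => by positivity) ?_ fun i => ?_
    · simp [c]
      field_simp
    · rw [hB]
      exact (hsep i).keyEmbedding_mul_mul_conjTranspose i
  have hγσ : (((dk : ℝ) : ℂ) • σ - γ).PosSemidef := by
    have h := (posSemidef_card_smul_sum_sub_sum_sum B hρS.1).smul
      (Complex.zero_le_real.mpr (by positivity : 0 ≤ c))
    have heq : ((dk : ℝ) : ℂ) • σ - γ = (c : ℂ) • ((Fintype.card (Fin dk) : ℂ) •
        ∑ i, B i * ρS * (B i)ᴴ - ∑ i, ∑ j, B i * ρS * (B j)ᴴ) := by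
      rw [hγB, Fintype.card_fin]
      simp only [σ, ← Finset.smul_sum]
      module
    rwa [heq]
  refine le_trans (csInf_le ⟨0, ?_⟩ ⟨σ, hσ, rfl⟩)
    (Dh_le_logb_sub_logb_of_posSemidef_smul_sub hσ.isDensity.1 (by exact_mod_cast hdk) hε hγσ)
  rintro _ ⟨σ', hσ', rfl⟩
  exact Dh_nonneg hσ'.isDensity

/-- for a strictly irreducible private state `γ` with key dimension `dk`
and `ε ∈ [0,1]`, the ε-hypothesis-testing relative entropy of entanglement obeys
`inf_{σ ∈ SEP} D_h^ε(γ‖σ) ≤ log₂ dk − log₂(1−ε)`. -/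
theorem sir_hypothesis_testing_bound (dk ds : ℕ) (hdk : 1 ≤ dk) (hds : 1 ≤ ds)
    (γ : Matrix (SIRSpace dk ds) (SIRSpace dk ds) ℂ) (hγ : IsSIR γ)
    (ε : ℝ) (hε : ε ∈ Set.Icc (0 : ℝ) 1) :
    sInf {x : ℝ | ∃ σ : Matrix (SIRSpace dk ds) (SIRSpace dk ds) ℂ,
        IsSeparable σ ∧ x = Dh ε γ σ} ≤
      Real.logb 2 dk - Real.logb 2 (1 - ε) :=
  sir_hypothesis_testing_bound_general dk ds hdk γ hγ ε hε

end KeyCost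
end
end
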